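/- Let a ∈ (0,1), c₁ > 2, c̄ = c₁/2 - √a + (1-a)/(c₁/2 - √a), and define w₁(t,x) = max{J₁(t,x), 0} with J₁ as in the explicit piecewise formula. If c₁/2 ∈ (1, √a + √(1-a)], then c̄ < c₁ and the zero set of w₁ on {t > 0} is exactly {(t,x) : t > 0, x ≤ c̄ t}. -/

import Mathlib

/-!
Write `b = c₁/2 - √a`, so that `c₁ - 2√a = 2b` and `c̄ = b + (1 - a)/b`. Since `c₁/2 > 1`,
`b (c₁/2 + √a) = c₁²/4 - a > 1 - a`, which gives `c̄ < c₁`; since `b ≤ √(1 - a)`, also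
`2b ≤ c̄`. On `x ≥ c₁ t` the first piece is positive because `x/t ≥ c₁ > 2`; on the two pieces
below `x = 2b t` the function `J₁` is nonpositive because `x/t < 2b ≤ 2√(1 - a)`. Hence, for
`t > 0`, `J₁ ≤ 0` exactly where the linear middle piece `b (x - c̄ t)` is, i.e. on `x ≤ c̄ t`.
-/

noncomputable def J₁ (a c₁ : ℝ) (t x : ℝ) : ℝ :=
  if c₁ * t ≤ x then t / 4 * (x ^ 2 / t ^ 2 - 4)
  else if (c₁ - 2 * Real.sqrt a) * t ≤ x then
    (c₁ / 2 - Real.sqrt a) *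
      (x - (c₁ / 2 - Real.sqrt a + (1 - a) / (c₁ / 2 - Real.sqrt a)) * t)
  else if 0 ≤ x then t / 4 * (x ^ 2 / t ^ 2 - 4 * (1 - a))
  else -t * (1 - a)

noncomputable def w₁ (a c₁ : ℝ) (t x : ℝ) : ℝ := max (J₁ a c₁ t x) 0

open Real

noncomputable def cbar (a c₁ : ℝ) : ℝ := c₁ / 2 - √a + (1 - a) / (c₁ / 2 - √a)

section

variable {a c₁ t x : ℝ}

lemma half_sub_sqrt_pos (ha1 : a < 1) (hc : 2 < c₁) : 0 < c₁ / 2 - √a := by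
  have : √a < 1 := (sqrt_lt' one_pos).2 (by linarith)
  linarith

lemma half_sub_sqrt_sq_le (ha1 : a < 1) (hc : 2 < c₁) (hc2 : c₁ / 2 ≤ √a + √(1 - a)) :
    (c₁ / 2 - √a) ^ 2 ≤ 1 - a :=
  (le_sqrt (half_sub_sqrt_pos ha1 hc).le (by linarith)).1 (by linarith)

lemma cbar_lt (ha : 0 ≤ a) (ha1 : a < 1) (hc : 2 < c₁) : cbar a c₁ < c₁ := by
  have hb := half_sub_sqrt_pos ha1 hc
  have hsq : √a ^ 2 = a := sq_sqrt ha
  have : (1 - a) / (c₁ / 2 - √a) < c₁ / 2 + √a := by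
    rw [div_lt_iff₀ hb]
    nlinarith
  unfold cbar
  linarith

lemma sub_two_sqrt_le_cbar (ha1 : a < 1) (hc : 2 < c₁) (hc2 : c₁ / 2 ≤ √a + √(1 - a)) :
    c₁ - 2 * √a ≤ cbar a c₁ := by
  have hb := half_sub_sqrt_pos ha1 hc
  have hb_sq := half_sub_sqrt_sq_le ha1 hc hc2
  have : c₁ / 2 - √a ≤ (1 - a) / (c₁ / 2 - √a) := by
    rw [le_div_iff₀ hb]
    nlinarith
  unfold cbar
  linarith

lemma J₁_pos_of_mul_le (ht : 0 < t) (hc : 2 < c₁) (hx : c₁ * t ≤ x) : 0 < J₁ a c₁ t x := by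
  have hxt : 2 < x / t := by
    rw [lt_div_iff₀ ht]
    nlinarith
  have : 4 < x ^ 2 / t ^ 2 := by
    rw [← div_pow]
    nlinarith
  rw [J₁, if_pos hx]
  exact mul_pos (by positivity) (by linarith)

lemma J₁_eq_of_mem_Ico (hx₁ : (c₁ - 2 * √a) * t ≤ x) (hx₂ : x < c₁ * t) :
    J₁ a c₁ t x = (c₁ / 2 - √a) * (x - cbar a c₁ * t) := by
  rw [J₁, if_neg hx₂.not_ge, if_pos hx₁, cbar]

lemma J₁_nonpos_of_lt (ht : 0 < t) (ha1 : a < 1) (hc : 2 < c₁)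
    (hc2 : c₁ / 2 ≤ √a + √(1 - a)) (hx : x < (c₁ - 2 * √a) * t) : J₁ a c₁ t x ≤ 0 := by
  have hb_sq := half_sub_sqrt_sq_le ha1 hc hc2
  have hx' : ¬ c₁ * t ≤ x := by nlinarith [sqrt_nonneg a]
  rw [J₁, if_neg hx', if_neg hx.not_ge]
  split_ifs with hx₀
  · have hxt : x / t < 2 * (c₁ / 2 - √a) := by
      rw [div_lt_iff₀ ht]
      linarith
    have : x ^ 2 / t ^ 2 ≤ 4 * (1 - a) := by
      rw [← div_pow]
      nlinarith [div_nonneg hx₀ ht.le]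
    exact mul_nonpos_of_nonneg_of_nonpos (by positivity) (by linarith)
  · nlinarith

theorem J₁_nonpos_iff (ht : 0 < t) (ha : 0 ≤ a) (ha1 : a < 1) (hc : 2 < c₁)
    (hc2 : c₁ / 2 ≤ √a + √(1 - a)) : J₁ a c₁ t x ≤ 0 ↔ x ≤ cbar a c₁ * t := by
  have hcbar := mul_lt_mul_of_pos_right (cbar_lt ha ha1 hc) ht
  have hlow := mul_le_mul_of_nonneg_right (sub_two_sqrt_le_cbar ha1 hc hc2) ht.le
  rcases lt_or_ge x ((c₁ - 2 * √a) * t) with hx_low | hx_low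
  · exact iff_of_true (J₁_nonpos_of_lt ht ha1 hc hc2 hx_low) (by linarith)
  rcases lt_or_ge x (c₁ * t) with hx_mid | hx_high
  · have hb := half_sub_sqrt_pos ha1 hc
    rw [J₁_eq_of_mem_Ico hx_low hx_mid, ← mul_zero (c₁ / 2 - √a), mul_le_mul_iff_right₀ hb,
      sub_nonpos]
  · exact iff_of_false (J₁_pos_of_mul_le ht hc hx_high).not_ge (by linarith)

end

theorem stmt_11 (a c₁ : ℝ) (ha : 0 < a) (ha1 : a < 1) (hc : 2 < c₁)
    (hc2 : c₁ / 2 ≤ Real.sqrt a + Real.sqrt (1 - a)) :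
    (c₁ / 2 - Real.sqrt a + (1 - a) / (c₁ / 2 - Real.sqrt a)) < c₁ ∧
    {p : ℝ × ℝ | 0 < p.1 ∧ w₁ a c₁ p.1 p.2 = 0}
      = {p : ℝ × ℝ | 0 < p.1 ∧
          p.2 ≤ (c₁ / 2 - Real.sqrt a + (1 - a) / (c₁ / 2 - Real.sqrt a)) * p.1} := by
  refine ⟨cbar_lt ha.le ha1 hc, Set.ext fun p => and_congr_right fun ht => ?_⟩
  exact max_eq_right_iff.trans (J₁_nonpos_iff ht ha.le ha1 hc hc2)
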